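/- Let (K,ν) be a valued field and ω a valuation transcendental extension of ν to K(x). Let ω̄ and ω̄′ be two common extensions of ω and ν̄ to K̄(x) with minimal pairs of definition (a,γ) and (a′,γ′) respectively, and let Q, Q′ ∈ K[x] be the minimal polynomials of a and a′ over K. Then γ = γ′, deg Q = deg Q′, and ωQ = ωQ′. -/

import Mathlib

/- ---------------------------------------------------------------------------
Common definitions for formalizing "Minimal pairs, minimal fields and
implicit constant fields" (Dutta).

Valuations are formalized additively, as `AddValuation F (WithTop Γ)` where
`Γ` is a linearly ordered abelian group; the value `⊤` plays the role of the
value `∞` of `0`.  The algebraic closure `K̄` of `K` is `AlgebraicClosure K`,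
the rational function field `K(x)` is `RatFunc K`, and a fixed algebraic
closure of `K̄(x)` (equivalently, of `K(x)`) is
`Lhat K := AlgebraicClosure (RatFunc (AlgebraicClosure K))`.
--------------------------------------------------------------------------- -/

noncomputable section

open Polynomial

namespace VT

/-- The canonical embedding of the rational function field `K(x)` into `K̄(x)`. -/
def liftRF (K : Type) [Field K] : RatFunc K →+* RatFunc (AlgebraicClosure K) :=
  RatFunc.mapRingHom (Polynomial.mapRingHom (algebraMap K (AlgebraicClosure K)))
    (by
      intro p hp
      simp only [Submonoid.mem_comap, Polynomial.coe_mapRingHom]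
      rw [mem_nonZeroDivisors_iff_ne_zero] at hp ⊢
      rw [Ne, Polynomial.map_eq_zero_iff (algebraMap K (AlgebraicClosure K)).injective]
      exact hp)

variable {K : Type} [Field K] {Γ : Type} [AddCommGroup Γ] [LinearOrder Γ] [IsOrderedAddMonoid Γ]

/-- `w` extends the valuation `v` along the field embedding `g`. -/
def Extends {A B : Type} [Field A] [Field B] (g : A →+* B)
    (v : AddValuation A (WithTop Γ)) (w : AddValuation B (WithTop Γ)) : Prop :=
  ∀ x, w (g x) = v x

/-- `W` is the monomial valuation `ν̄_{a,γ}` on `K̄(x)` attached to `a ∈ K̄` and `γ ∈ Γ`: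
on a polynomial `p = Σᵢ cᵢ (x-a)ⁱ` its value is `minᵢ (ν̄ cᵢ + iγ)`.  (A valuation on
`K̄(x)` is determined by its restriction to polynomials.)  In particular `W` extends
the valuation `ν̄ = vbar` of `K̄`. -/
def IsMonomialVal (vbar : AddValuation (AlgebraicClosure K) (WithTop Γ))
    (W : AddValuation (RatFunc (AlgebraicClosure K)) (WithTop Γ))
    (a : AlgebraicClosure K) (γ : Γ) : Prop :=
  ∀ p : Polynomial (AlgebraicClosure K),
    W (algebraMap (Polynomial (AlgebraicClosure K)) (RatFunc (AlgebraicClosure K)) p) =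
      (Finset.range (p.natDegree + 1)).inf
        (fun i => vbar ((Polynomial.taylor a p).coeff i) + i • (γ : WithTop Γ))

/-- The degree `[K(a):K]` of an element `a` of the algebraic closure of `K`. -/
def degOver (K : Type) [Field K] (a : AlgebraicClosure K) : ℕ := (minpoly K a).natDegree

/-- `(a,γ)` is a pair of definition for the valuation `ω` on `K(x)`:  some common
extension of `ω` and `ν̄ = vbar` to `K̄(x)` is the monomial valuation `ν̄_{a,γ}`. -/
def IsPairOfDef (vbar : AddValuation (AlgebraicClosure K) (WithTop Γ))
    (ω : AddValuation (RatFunc K) (WithTop Γ)) (a : AlgebraicClosure K) (γ : Γ) : Prop :=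
  ∃ W : AddValuation (RatFunc (AlgebraicClosure K)) (WithTop Γ),
    IsMonomialVal vbar W a γ ∧ Extends (liftRF K) ω W

/-- `(a,γ)` is a minimal pair of definition for `ω`. -/
def IsMinimalPairOfDef (vbar : AddValuation (AlgebraicClosure K) (WithTop Γ))
    (ω : AddValuation (RatFunc K) (WithTop Γ)) (a : AlgebraicClosure K) (γ : Γ) : Prop :=
  IsPairOfDef vbar ω a γ ∧
    ∀ b : AlgebraicClosure K, (γ : WithTop Γ) ≤ vbar (a - b) → degOver K a ≤ degOver K b

/-- `(a,γ)` is a pair of definition for the valuation `W` on `K̄(x)`, i.e. `W = ν̄_{a,γ}`,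
and it is minimal: `a` has least degree over `K` among all `b` with `ν̄(a-b) ≥ γ`. -/
def IsMinimalPairFor (vbar : AddValuation (AlgebraicClosure K) (WithTop Γ))
    (W : AddValuation (RatFunc (AlgebraicClosure K)) (WithTop Γ))
    (a : AlgebraicClosure K) (γ : Γ) : Prop :=
  IsMonomialVal vbar W a γ ∧
    ∀ b : AlgebraicClosure K, (γ : WithTop Γ) ≤ vbar (a - b) → degOver K a ≤ degOver K b

/-- The valued field extension `(F|B, w)` (along `φ`) is value transcendental:
the quotient of value groups `wF / w(B)` has rational rank one, i.e. there is a value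
which is not torsion modulo the value group of the base, and any two values are
`ℚ`-linearly dependent modulo the value group of the base.  (For the extensions of
valuations from `K` to `K(x)` considered in the paper, the second condition is
automatic, by the Abhyankar inequality.) -/
def IsValueTranscendental {B F : Type} [Field B] [Field F] (φ : B →+* F)
    (w : AddValuation F (WithTop Γ)) : Prop :=
  (∃ (f : F) (γf : Γ), f ≠ 0 ∧ w f = (γf : WithTop Γ) ∧
      ∀ n : ℤ, n ≠ 0 → ∀ c : B, c ≠ 0 → ((n • γf : Γ) : WithTop Γ) ≠ w (φ c)) ∧
  (∀ (f g : F) (γf γg : Γ), f ≠ 0 → g ≠ 0 → w f = (γf : WithTop Γ) → w g = (γg : WithTop Γ) →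
      ∃ m n : ℤ, ¬(m = 0 ∧ n = 0) ∧
        ∃ c : B, c ≠ 0 ∧ ((m • γf + n • γg : Γ) : WithTop Γ) = w (φ c))

/-- The residue of `u` (an element of the valuation ring of `(F,w)`) is transcendental
over the residue field of the subset `S ⊆ F`:  whenever a polynomial expression
`Σᵢ cᵢ uⁱ` with coefficients `cᵢ ∈ S` of value `≥ 0` has value `> 0`, all the
coefficients have value `> 0` (i.e. residue `0`). -/
def ResidueTransOver {F : Type} [Field F] (w : AddValuation F (WithTop Γ))
    (S : Set F) (u : F) : Prop :=
  ∀ (n : ℕ) (c : ℕ → F), (∀ i ∈ Finset.range (n + 1), c i ∈ S ∧ 0 ≤ w (c i)) →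
    0 < w (∑ i ∈ Finset.range (n + 1), c i * u ^ i) →
    ∀ i ∈ Finset.range (n + 1), 0 < w (c i)

/-- The valued field extension `(F|B, w)` (along `φ`) is residue transcendental:
the residue field extension has transcendence degree one, i.e. some residue is
transcendental over the residue field of the base.  (For the extensions of valuations
from `K` to `K(x)` considered in the paper, transcendence degree `≤ 1` is automatic,
by the Abhyankar inequality.) -/
def IsResidueTranscendental {B F : Type} [Field B] [Field F] (φ : B →+* F)
    (w : AddValuation F (WithTop Γ)) : Prop :=
  ∃ f : F, w f = 0 ∧ ResidueTransOver w (Set.range φ) f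

/-- The extension is valuation transcendental: value transcendental or residue
transcendental. -/
def IsValuationTranscendental {B F : Type} [Field B] [Field F] (φ : B →+* F)
    (w : AddValuation F (WithTop Γ)) : Prop :=
  IsValueTranscendental φ w ∨ IsResidueTranscendental φ w

/-- The value group of the subset `S ⊆ F` under `w`, as a subgroup of `Γ`:
the subgroup { w f | f ∈ S, f ≠ 0 }.  (For `S` a subfield this set is already a
subgroup, so taking the generated subgroup is harmless.) -/
def valueSubgroup {F : Type} [Field F] (w : AddValuation F (WithTop Γ)) (S : Set F) :
    AddSubgroup Γ :=
  AddSubgroup.closure {γ : Γ | ∃ f ∈ S, f ≠ 0 ∧ w f = (γ : WithTop Γ)}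

/-- The subsets `S₁, S₂` of the valued field `(F,w)` have the same residues, i.e. they
induce the same residue field inside the residue field of `(F,w)`. -/
def SameResidues {F : Type} [Field F] (w : AddValuation F (WithTop Γ))
    (S₁ S₂ : Set F) : Prop :=
  (∀ f ∈ S₁, 0 ≤ w f → ∃ g ∈ S₂, 0 ≤ w g ∧ 0 < w (f - g)) ∧
  (∀ g ∈ S₂, 0 ≤ w g → ∃ f ∈ S₁, 0 ≤ w f ∧ 0 < w (g - f))

/-- The residue field of `S₂` has degree `j` over the residue field of `S₁` (both viewed
inside the residue field of `(F,w)`): there are `j` elements of `S₂`, integral for `w`,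
whose residues form a basis of the residue field of `S₂` over that of `S₁`. -/
def ResidueDegreeIs {F : Type} [Field F] (w : AddValuation F (WithTop Γ))
    (S₁ S₂ : Set F) (j : ℕ) : Prop :=
  ∃ g : Fin j → F,
    (∀ i, g i ∈ S₂ ∧ 0 ≤ w (g i)) ∧
    (∀ h ∈ S₂, 0 ≤ w h →
      ∃ c : Fin j → F, (∀ i, c i ∈ S₁ ∧ 0 ≤ w (c i)) ∧ 0 < w (h - ∑ i, c i * g i)) ∧
    (∀ c : Fin j → F, (∀ i, c i ∈ S₁ ∧ 0 ≤ w (c i)) →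
      0 < w (∑ i, c i * g i) → ∀ i, 0 < w (c i))

/-- `κ` is the Krasner constant `kras(a,K) = max { ν̄(σa - τa) : σ, τ ∈ Gal(K̄|K), σa ≠ τa }`. -/
def IsKrasnerConstant (vbar : AddValuation (AlgebraicClosure K) (WithTop Γ))
    (a : AlgebraicClosure K) (κ : WithTop Γ) : Prop :=
  (∃ σ τ : AlgebraicClosure K ≃ₐ[K] AlgebraicClosure K, σ a ≠ τ a ∧ vbar (σ a - τ a) = κ) ∧
  (∀ σ τ : AlgebraicClosure K ≃ₐ[K] AlgebraicClosure K, σ a ≠ τ a → vbar (σ a - τ a) ≤ κ)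

/-- `y` is separable algebraic over the subfield `E` of `F`: it is the root of a nonzero
separable polynomial with coefficients in `E`. -/
def SepAlgOver {F : Type} [Field F] (E : Subfield F) (y : F) : Prop :=
  ∃ p : Polynomial F, p ≠ 0 ∧ (∀ i, p.coeff i ∈ E) ∧ p.Separable ∧ p.eval y = 0

/-- `y` is algebraic over the subfield `E` of `F`. -/
def AlgOver {F : Type} [Field F] (E : Subfield F) (y : F) : Prop :=
  ∃ p : Polynomial F, p ≠ 0 ∧ (∀ i, p.coeff i ∈ E) ∧ p.eval y = 0

/-- The henselization `E^h` of the subfield `E` of the algebraically closed valued field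
`(F,Ω)`, realized inside `F` as the decomposition field: the set of elements of `F`
separable algebraic over `E` and fixed by every automorphism of `F` over `E` which
preserves the valuation `Ω`. -/
def henselizationSet {F : Type} [Field F] (Ω : AddValuation F (WithTop Γ))
    (E : Subfield F) : Set F :=
  {y | SepAlgOver E y ∧
    ∀ σ : F ≃+* F, (∀ e ∈ E, σ e = e) → (∀ z, Ω (σ z) = Ω z) → σ y = y}

/-- A fixed algebraic closure of `K̄(x)`; it is also an algebraic closure of `K(x)`. -/
abbrev Lhat (K : Type) [Field K] : Type := AlgebraicClosure (RatFunc (AlgebraicClosure K))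

/-- The canonical embedding `K̄ → Lhat K`. -/
def toL (K : Type) [Field K] : AlgebraicClosure K →+* Lhat K :=
  (algebraMap (RatFunc (AlgebraicClosure K)) (Lhat K)).comp
    (algebraMap (AlgebraicClosure K) (RatFunc (AlgebraicClosure K)))

/-- The canonical embedding `K(x) → Lhat K`. -/
def kxToL (K : Type) [Field K] : RatFunc K →+* Lhat K :=
  (algebraMap (RatFunc (AlgebraicClosure K)) (Lhat K)).comp (liftRF K)

/-- The subfield `K(x)` of `Lhat K`. -/
def KxSub (K : Type) [Field K] : Subfield (Lhat K) := (kxToL K).fieldRange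

/-- The subfield `K` of `Lhat K`. -/
def KSub (K : Type) [Field K] : Subfield (Lhat K) :=
  ((toL K).comp (algebraMap K (AlgebraicClosure K))).fieldRange

/-- The subfield `K(a)` of `Lhat K`, for `a ∈ K̄`. -/
def KadjSub (K : Type) [Field K] (a : AlgebraicClosure K) : Subfield (Lhat K) :=
  Subfield.closure ((KSub K : Set (Lhat K)) ∪ {toL K a})

/-- The subfield `K(a,x)` of `Lhat K`, for `a ∈ K̄`. -/
def KaxSub (K : Type) [Field K] (a : AlgebraicClosure K) : Subfield (Lhat K) :=
  Subfield.closure ((KxSub K : Set (Lhat K)) ∪ {toL K a})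

/-- The implicit constant field `IC(K(x)|K,ω) = K̄ ∩ K(x)^h`, computed inside the fixed
algebraic closure `Lhat K` of `K(x)` with respect to the valuation `Ω` on it. -/
def ICset (K : Type) [Field K] {Γ : Type} [AddCommGroup Γ] [LinearOrder Γ] [IsOrderedAddMonoid Γ]
    (Ω : AddValuation (Lhat K) (WithTop Γ)) : Set (Lhat K) :=
  Set.range (toL K) ∩ henselizationSet Ω (KxSub K)

/-- `σ` belongs to the absolute inertia group of `(K,ν̄)`:
`ν̄(σc - c) > 0` for every `c` in the valuation ring of `K^sep`. -/
def InInertiaGroup (vbar : AddValuation (AlgebraicClosure K) (WithTop Γ))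
    (σ : AlgebraicClosure K ≃ₐ[K] AlgebraicClosure K) : Prop :=
  ∀ c : AlgebraicClosure K, (minpoly K c).Separable → 0 ≤ vbar c → 0 < vbar (σ c - c)

/-- `σ` belongs to the absolute ramification group of `(K,ν̄)`:
`ν̄(σc - c) > ν̄ c` for every `c ∈ K^sep`, `c ≠ 0`. -/
def InRamificationGroup (vbar : AddValuation (AlgebraicClosure K) (WithTop Γ))
    (σ : AlgebraicClosure K ≃ₐ[K] AlgebraicClosure K) : Prop :=
  ∀ c : AlgebraicClosure K, c ≠ 0 → (minpoly K c).Separable → vbar c < vbar (σ c - c)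

/-- The absolute inertia field `K^i` of `(K,ν̄)`, as a subset of `K̄`: the fixed field in
`K^sep` of the absolute inertia group. -/
def inertiaFieldSet (vbar : AddValuation (AlgebraicClosure K) (WithTop Γ)) :
    Set (AlgebraicClosure K) :=
  {c | (minpoly K c).Separable ∧
    ∀ σ : AlgebraicClosure K ≃ₐ[K] AlgebraicClosure K, InInertiaGroup vbar σ → σ c = c}

/-- The absolute ramification field `K^r` of `(K,ν̄)`, as a subset of `K̄`: the fixed field
in `K^sep` of the absolute ramification group. -/
def ramificationFieldSet (vbar : AddValuation (AlgebraicClosure K) (WithTop Γ)) :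
    Set (AlgebraicClosure K) :=
  {c | (minpoly K c).Separable ∧
    ∀ σ : AlgebraicClosure K ≃ₐ[K] AlgebraicClosure K, InRamificationGroup vbar σ → σ c = c}

/-- `(K,ν)` is henselian, i.e. `ν` extends uniquely to `K̄`; equivalently (all extensions
of `ν` to `K̄` being conjugate), the fixed extension `ν̄` is invariant under `Gal(K̄|K)`. -/
def IsHenselianBase (vbar : AddValuation (AlgebraicClosure K) (WithTop Γ)) : Prop :=
  ∀ σ : AlgebraicClosure K ≃ₐ[K] AlgebraicClosure K, ∀ c, vbar (σ c) = vbar c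

/-- `ν` admits a unique extension from `K` to `K(a)`; equivalently, all the conjugate
extensions agree on `K(a)`. -/
def UniqueExtensionOn (vbar : AddValuation (AlgebraicClosure K) (WithTop Γ))
    (a : AlgebraicClosure K) : Prop :=
  ∀ σ : AlgebraicClosure K ≃ₐ[K] AlgebraicClosure K,
    ∀ b ∈ IntermediateField.adjoin K {a}, vbar (σ b) = vbar b

/-- `succ` is a successor function for the linear order `ι`. -/
def IsSuccFn {ι : Type} [LinearOrder ι] (succ : ι → ι) : Prop :=
  ∀ μ, μ < succ μ ∧ ∀ ρ, μ < ρ → succ μ ≤ ρ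

/-- `z` is a pseudo-Cauchy sequence in `(F,v)`. -/
def IsPseudoCauchy {F ι : Type} [Field F] [LinearOrder ι]
    (v : AddValuation F (WithTop Γ)) (z : ι → F) : Prop :=
  ∀ ⦃μ₁ μ₂ μ₃ : ι⦄, μ₁ < μ₂ → μ₂ < μ₃ → v (z μ₁ - z μ₂) < v (z μ₂ - z μ₃)

/-- `y` (in the valued extension `(F,w)` of `(B,v)` along `φ`) is a limit of the
pseudo-Cauchy sequence `z` in `(B,v)`:  `w(y - z_μ) = v(z_μ - z_{μ+1})` for all `μ`. -/
def IsPCLimit {B F ι : Type} [Field B] [Field F] [LinearOrder ι]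
    (succ : ι → ι) (φ : B →+* F)
    (v : AddValuation B (WithTop Γ)) (w : AddValuation F (WithTop Γ))
    (z : ι → B) (y : F) : Prop :=
  ∀ μ : ι, w (y - φ (z μ)) = v (z μ - z (succ μ))

/-- The sequence `s` is ultimately constant. -/
def UltimatelyConstant {ι α : Type} [LinearOrder ι] (s : ι → α) : Prop :=
  ∃ μ₀, ∀ μ, μ₀ ≤ μ → s μ = s μ₀

/-- The sequence `s` is ultimately (strictly) monotonically increasing. -/
def UltimatelyStrictMono {ι α : Type} [LinearOrder ι] [Preorder α] (s : ι → α) : Prop :=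
  ∃ μ₀, ∀ μ₁ μ₂, μ₀ ≤ μ₁ → μ₁ < μ₂ → s μ₁ < s μ₂

/-- The pseudo-Cauchy sequence `z` in `(B,v)` is of transcendental type. -/
def IsTranscendentalType {B ι : Type} [Field B] [LinearOrder ι]
    (v : AddValuation B (WithTop Γ)) (z : ι → B) : Prop :=
  ∀ f : Polynomial B, UltimatelyConstant (fun μ => v (f.eval (z μ)))

/-- `m` is an associated minimal polynomial of the pseudo-Cauchy sequence `z` of
algebraic type: a monic polynomial of minimal degree such that `(v m(z_μ))_μ` is
ultimately monotonically increasing. -/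
def IsAssocMinPoly {B ι : Type} [Field B] [LinearOrder ι]
    (v : AddValuation B (WithTop Γ)) (z : ι → B) (m : Polynomial B) : Prop :=
  m.Monic ∧ UltimatelyStrictMono (fun μ => v (m.eval (z μ))) ∧
    ∀ g : Polynomial B, g.Monic → UltimatelyStrictMono (fun μ => v (g.eval (z μ))) →
      m.natDegree ≤ g.natDegree

/-- `d = δ(f) = max { ω̄(x - c) : c ∈ K̄, f(c) = 0 }`, computed with respect to the
extension `W = ω̄` of `ω` to `K̄(x)`. -/
def IsDeltaOf (W : AddValuation (RatFunc (AlgebraicClosure K)) (WithTop Γ))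
    (f : Polynomial K) (d : WithTop Γ) : Prop :=
  (∃ c : AlgebraicClosure K, Polynomial.aeval c f = 0 ∧
      W (RatFunc.X - algebraMap (AlgebraicClosure K) (RatFunc (AlgebraicClosure K)) c) = d) ∧
  ∀ c : AlgebraicClosure K, Polynomial.aeval c f = 0 →
      W (RatFunc.X - algebraMap (AlgebraicClosure K) (RatFunc (AlgebraicClosure K)) c) ≤ d

/-- `Q` is a key polynomial for `ω` over `K` (with respect to the extension `W = ω̄`,
on which `δ` does not depend): `Q` is monic and `deg f < deg Q → δ(f) < δ(Q)`. -/
def IsKeyPolynomial (W : AddValuation (RatFunc (AlgebraicClosure K)) (WithTop Γ))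
    (Q : Polynomial K) : Prop :=
  Q.Monic ∧ ∀ f : Polynomial K, f.natDegree < Q.natDegree →
    ∀ df dQ : WithTop Γ, IsDeltaOf W f df → IsDeltaOf W Q dQ → df < dQ

/-- `(a,z)` is a distinguished pair over the henselian field `(K,ν̄)`:
`[K(z):K] < [K(a):K]`, `ν̄(a-z) = δ(a,K) = max M(a)`, and `[K(z):K]` is minimal
with these properties. -/
def IsDistinguishedPair (vbar : AddValuation (AlgebraicClosure K) (WithTop Γ))
    (a z : AlgebraicClosure K) : Prop :=
  degOver K z < degOver K a ∧
  (∀ z' : AlgebraicClosure K, degOver K z' < degOver K a → vbar (a - z') ≤ vbar (a - z)) ∧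
  (∀ z' : AlgebraicClosure K, degOver K z' < degOver K a → vbar (a - z') = vbar (a - z) →
      degOver K z ≤ degOver K z')

/-- The extension `(E(x)|E, W)` inside the valued field `(F,W)` is pure, where `x ∈ F`:
(PE1) some `W(x-c)`, `c ∈ E`, is non-torsion modulo the value group of `E`, or
(PE2) some `b(x-c)`, `b,c ∈ E`, has value `0` and residue transcendental over the
residue field of `E`, or (PE3) `x` is the limit of a pseudo-Cauchy sequence of
transcendental type in `(E,W)`. -/
def IsPureExt {F : Type} [Field F] (W : AddValuation F (WithTop Γ))
    (E : Subfield F) (x : F) : Prop :=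
  (∃ c ∈ E, ∃ γ : Γ, W (x - c) = (γ : WithTop Γ) ∧
      ∀ n : ℤ, n ≠ 0 → ∀ b ∈ E, b ≠ 0 → ((n • γ : Γ) : WithTop Γ) ≠ W b) ∨
  (∃ b ∈ E, ∃ c ∈ E, W (b * (x - c)) = 0 ∧ ResidueTransOver W (E : Set F) (b * (x - c))) ∨
  (∃ (ι : Type) (_ : LinearOrder ι) (succ : ι → ι), Nonempty ι ∧ IsSuccFn succ ∧
      ∃ z : ι → F, (∀ μ, z μ ∈ E) ∧ IsPseudoCauchy W z ∧
        (∀ p : Polynomial F, (∀ i, p.coeff i ∈ E) →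
          UltimatelyConstant fun μ => W (p.eval (z μ))) ∧
        IsPCLimit succ (RingHom.id F) W W z x)

/-- The extension `(E(x)|E, W)` is weakly pure: it is pure, or some `b(x-c)^e` with
`b,c ∈ E`, `e ∈ ℕ`, has value `0` and residue transcendental over the residue field
of `E`. -/
def IsWeaklyPureExt {F : Type} [Field F] (W : AddValuation F (WithTop Γ))
    (E : Subfield F) (x : F) : Prop :=
  IsPureExt W E x ∨
    ∃ b ∈ E, ∃ c ∈ E, ∃ e : ℕ, W (b * (x - c) ^ e) = 0 ∧
      ResidueTransOver W (E : Set F) (b * (x - c) ^ e)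

end VT

/-!
For `f ∈ K[X]` of degree `< [K(a):K]`, minimality of `(a,γ)` puts every root of `f` at distance
`< γ` from `a`, and then `ω f = ν̄ (f(a))`. When `deg Q = deg Q'`, applying this to `Q - Q'` at `a`
and at `a'` gives `ωQ = ωQ'`. Applying it to the Hasse derivative `∂ⱼQ`, where `j ≥ 1` (as
`Q(a) = 0`) is an index attaining `ωQ = minᵢ (ν̄ (∂ᵢQ)(a) + iγ)`, gives
`ωQ ≤ ν̄ (∂ⱼQ)(a') + jγ' = ωQ - jγ + jγ'`, hence `γ ≤ γ'`.

The degrees agree because a minimal pair has least degree among all pairs of definition of common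
extensions of `ω` and `ν̄`. If `deg Q' < deg Q`, all roots of `Q'` are far from `a`, so
`ω̄ (Q' - b) > ν̄ b` for `b = Q'(a)`, and for the minimal polynomial `u` of `b` over `K` this forces
`ω (u(Q')) > μ = minᵢ (ν̄ uᵢ + i ν̄ b)`. On the other side `ν̄ b = ωQ'` is the `γ'`-Gauss value of
the Taylor expansion of `Q'` at `a'`, attained last at some `j ≥ 1`; last attaining indices
multiply under composition, so the Gauss value of `u(Q')` at `a'` is exactly `μ`.
-/

section ValuationLemmas

variable {Γ : Type} [AddCommGroup Γ] [LinearOrder Γ] [IsOrderedAddMonoid Γ]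

theorem WithTop.coe_sub_le_iff_le_add {x : WithTop Γ} {a b : Γ} :
    ((a - b : Γ) : WithTop Γ) ≤ x ↔ (a : WithTop Γ) ≤ x + b := by
  induction x with
  | top => simp
  | coe x => norm_cast; exact sub_le_iff_le_add

theorem WithTop.coe_sub_lt_iff_lt_add {x : WithTop Γ} {a b : Γ} :
    ((a - b : Γ) : WithTop Γ) < x ↔ (a : WithTop Γ) < x + b := by
  induction x with
  | top => exact iff_of_true (WithTop.coe_lt_top _) (by simp)
  | coe x => norm_cast; exact sub_lt_iff_lt_add

namespace AddValuation

variable {R : Type*} [CommRing R] (v : AddValuation R (WithTop Γ))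

theorem map_sum_eq_of_lt {ι : Type*} [DecidableEq ι] {s : Finset ι} {f : ι → R} {j : ι}
    (hj : j ∈ s) (hf : ∀ i ∈ s, i ≠ j → v (f j) < v (f i)) :
    v (∑ i ∈ s, f i) = v (f j) := by
  rw [← Finset.add_sum_erase s f hj]
  rcases eq_or_ne (v (f j)) ⊤ with htop | htop
  · rw [Finset.sum_eq_zero fun i hi => ?_, add_zero]
    have := hf i (Finset.mem_of_mem_erase hi) (Finset.ne_of_mem_erase hi)
    exact absurd this (htop ▸ not_top_lt)
  · exact map_add_eq_of_lt_left v <| map_lt_sum v htop fun i hi =>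
      hf i (Finset.mem_of_mem_erase hi) (Finset.ne_of_mem_erase hi)

theorem map_eq_of_le_map_sub {x y : R} (hx : v x ≤ v (x - y)) (hy : v y ≤ v (x - y)) :
    v x = v y := by
  refine le_antisymm ?_ ?_
  · simpa using (le_min le_rfl hx).trans (map_sub v x (x - y))
  · simpa using (le_min le_rfl hy).trans (map_add v y (x - y))

theorem coe_add_le_map_mul {a b : Γ} {x y : R} (hx : (a : WithTop Γ) ≤ v x)
    (hy : (b : WithTop Γ) ≤ v y) : ((a + b : Γ) : WithTop Γ) ≤ v (x * y) := by
  rw [map_mul, WithTop.coe_add]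
  exact add_le_add hx hy

theorem coe_add_lt_map_mul {a b : Γ} {x y : R} (hx : (a : WithTop Γ) ≤ v x)
    (hy : (b : WithTop Γ) ≤ v y) (h : (a : WithTop Γ) < v x ∨ (b : WithTop Γ) < v y) :
    ((a + b : Γ) : WithTop Γ) < v (x * y) := by
  rw [map_mul, WithTop.coe_add]
  rcases h with h | h
  · exact WithTop.add_lt_add_of_lt_of_le WithTop.coe_ne_top h hy
  · exact WithTop.add_lt_add_of_le_of_lt WithTop.coe_ne_top hx h

theorem lt_map_mul_sub_mul {x y x' y' : R} (h : v y < v (x - y)) (h' : v y' < v (x' - y')) :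
    v (y * y') < v (x * x' - y * y') := by
  have hx : v x = v y := map_eq_of_lt_sub v h
  rw [show x * x' - y * y' = x * (x' - y') + (x - y) * y' by ring]
  refine lt_of_lt_of_le ?_ (map_add v _ _)
  rw [map_mul, map_mul, map_mul, hx]
  exact lt_min (WithTop.add_lt_add_left h.ne_top h') (WithTop.add_lt_add_right h'.ne_top h)

theorem lt_map_multiset_prod_sub_prod {ι : Type*} (s : Multiset ι) {x y : ι → R}
    (h : ∀ i ∈ s, v (y i) < v (x i - y i)) :
    v (s.map y).prod < v ((s.map x).prod - (s.map y).prod) := by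
  induction s using Multiset.induction_on with
  | empty => simp
  | cons i s ih =>
    simp only [Multiset.map_cons, Multiset.prod_cons]
    exact lt_map_mul_sub_mul v (h i (Multiset.mem_cons_self i s))
      (ih fun k hk => h k (Multiset.mem_cons_of_mem hk))

theorem lt_map_pow_sub_pow {x y : R} (h : v y < v (x - y)) (n : ℕ) :
    v (y ^ n) < v (x ^ n - y ^ n) := by
  simpa using lt_map_multiset_prod_sub_prod v (Multiset.replicate n ()) (x := fun _ => x)
    (y := fun _ => y) fun _ _ => h

open Polynomial in
theorem lt_map_eval_of_eval_eq_zero {u : R[X]} {x y : R} {Λ μ : Γ} (hy : v y = Λ)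
    (hxy : v y < v (x - y)) (hu : ∀ i, ((μ - i • Λ : Γ) : WithTop Γ) ≤ v (u.coeff i))
    (hroot : u.eval y = 0) : (μ : WithTop Γ) < v (u.eval x) := by
  have hsum : u.eval x = ∑ i ∈ Finset.range (u.natDegree + 1), u.coeff i * (x ^ i - y ^ i) := by
    rw [← sub_zero (u.eval x), ← hroot, eval_eq_sum_range, eval_eq_sum_range,
      ← Finset.sum_sub_distrib]
    simp only [mul_sub]
  rw [hsum]
  refine map_lt_sum v WithTop.coe_ne_top fun i _ => ?_
  have hyi : v (y ^ i) = ((i • Λ : Γ) : WithTop Γ) := by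
    rw [map_pow, hy, WithTop.coe_nsmul]
  have hdiff := hyi.symm.trans_lt (lt_map_pow_sub_pow v hxy i)
  simpa using coe_add_lt_map_mul v (hu i) hdiff.le (Or.inr hdiff)

end AddValuation

end ValuationLemmas

theorem Polynomial.coeff_taylor_map_algebraMap {R S : Type*} [CommRing R] [CommRing S]
    [Algebra R S] (f : R[X]) (r : S) (i : ℕ) :
    (taylor r (f.map (algebraMap R S))).coeff i = aeval r (hasseDeriv i f) := by
  rw [taylor_coeff, aeval_def, ← eval_map]
  congr 1
  ext n
  simp [hasseDeriv_coeff, coeff_map]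

namespace VT

variable {K : Type} [Field K] {Γ : Type} [AddCommGroup Γ] [LinearOrder Γ] [IsOrderedAddMonoid Γ]

section GaussIndex

variable {R : Type*} [CommRing R]

/-- `Λ` is the `δ`-Gauss value `minᵢ (v pᵢ + iδ)` of `p`, and `j` is the largest index
attaining it. -/
def IsTopGaussIndex (v : AddValuation R (WithTop Γ)) (δ : Γ) (p : R[X]) (j : ℕ) (Λ : Γ) :
    Prop :=
  (∀ i, ((Λ - i • δ : Γ) : WithTop Γ) ≤ v (p.coeff i)) ∧
    v (p.coeff j) = ((Λ - j • δ : Γ) : WithTop Γ) ∧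
    ∀ i, j < i → ((Λ - i • δ : Γ) : WithTop Γ) < v (p.coeff i)

theorem exists_isTopGaussIndex {F : Type*} [Field F] {v : AddValuation F (WithTop Γ)} {δ : Γ}
    {p : F[X]} (hp : p ≠ 0) : ∃ j Λ, IsTopGaussIndex v δ p j Λ := by
  classical
  set term : ℕ → WithTop Γ := fun i => v (p.coeff i) + i • (δ : WithTop Γ)
  obtain ⟨i₀, hi₀, hmin⟩ := Finset.exists_min_image p.support term (support_nonempty.2 hp)
  obtain ⟨Λ, hΛ⟩ := WithTop.ne_top_iff_exists.1 (show term i₀ ≠ ⊤ from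
    WithTop.add_ne_top.2 ⟨(AddValuation.ne_top_iff v).2 (mem_support_iff.1 hi₀),
      by rw [← WithTop.coe_nsmul]; exact WithTop.coe_ne_top⟩)
  have hle : ∀ i, (Λ : WithTop Γ) ≤ term i := by
    intro i
    by_cases hi : i ∈ p.support
    · exact hΛ.symm ▸ hmin i hi
    · simp [term, notMem_support_iff.1 hi]
  set A := p.support.filter fun i => term i = Λ
  have hA : A.Nonempty := ⟨i₀, Finset.mem_filter.2 ⟨hi₀, hΛ.symm⟩⟩
  obtain ⟨hjsupp, hj⟩ := Finset.mem_filter.1 (A.max'_mem hA)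
  refine ⟨A.max' hA, Λ, fun i => WithTop.coe_sub_le_iff_le_add.2 ?_, ?_, fun i hi => ?_⟩
  · rw [WithTop.coe_nsmul]
    exact hle i
  · lift v (p.coeff (A.max' hA)) to Γ using
      (AddValuation.ne_top_iff v).2 (mem_support_iff.1 hjsupp) with c hc
    simp only [term, ← hc, ← WithTop.coe_nsmul] at hj ⊢
    norm_cast at hj ⊢
    exact eq_sub_of_add_eq hj
  · rw [WithTop.coe_sub_lt_iff_lt_add, WithTop.coe_nsmul]
    refine (hle i).lt_of_ne fun heq => ?_
    by_cases hsupp : i ∈ p.support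
    · exact absurd (A.le_max' i (Finset.mem_filter.2 ⟨hsupp, heq.symm⟩)) (not_le.2 hi)
    · simp [term, notMem_support_iff.1 hsupp] at heq

variable {v : AddValuation R (WithTop Γ)} {δ : Γ}

theorem isTopGaussIndex_one : IsTopGaussIndex v δ 1 0 0 := by
  refine ⟨fun i => ?_, by simp, fun i hi => ?_⟩
  · rcases eq_or_ne i 0 with rfl | hi
    · simp
    · simp [coeff_one, if_neg hi]
  · rw [coeff_one, if_neg hi.ne', AddValuation.map_zero]
    exact WithTop.coe_lt_top _

theorem IsTopGaussIndex.mul {p q : R[X]} {j k : ℕ} {Λ M : Γ} (hp : IsTopGaussIndex v δ p j Λ)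
    (hq : IsTopGaussIndex v δ q k M) : IsTopGaussIndex v δ (p * q) (j + k) (Λ + M) := by
  classical
  have hterm : ∀ n, ∀ x ∈ Finset.HasAntidiagonal.antidiagonal n,
      ((Λ + M - n • δ : Γ) : WithTop Γ) ≤ v (p.coeff x.1 * q.coeff x.2) ∧
        (j < x.1 ∨ k < x.2 →
          ((Λ + M - n • δ : Γ) : WithTop Γ) < v (p.coeff x.1 * q.coeff x.2)) := by
    intro n x hx
    have hsplit : Λ + M - n • δ = (Λ - x.1 • δ) + (M - x.2 • δ) := by
      rw [← Finset.HasAntidiagonal.mem_antidiagonal.1 hx, add_nsmul]; abel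
    rw [hsplit]
    exact ⟨AddValuation.coe_add_le_map_mul v (hp.1 _) (hq.1 _),
      fun h => AddValuation.coe_add_lt_map_mul v (hp.1 _) (hq.1 _) (h.imp (hp.2.2 _) (hq.2.2 _))⟩
  refine ⟨fun n => ?_, ?_, fun n hn => ?_⟩
  · rw [coeff_mul]
    exact AddValuation.map_le_sum v fun x hx => (hterm n x hx).1
  · have hcorner : v (p.coeff j * q.coeff k) = ((Λ + M - (j + k) • δ : Γ) : WithTop Γ) := by
      rw [AddValuation.map_mul, hp.2.1, hq.2.1, ← WithTop.coe_add, add_nsmul]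
      congr 1; abel
    rw [coeff_mul, AddValuation.map_sum_eq_of_lt v (j := (j, k))
      (Finset.HasAntidiagonal.mem_antidiagonal.2 rfl), hcorner]
    intro x hx hne
    rw [hcorner]
    refine (hterm _ x hx).2 ?_
    have := Finset.HasAntidiagonal.mem_antidiagonal.1 hx
    by_contra! h
    exact hne (Prod.ext (by omega) (by omega))
  · rw [coeff_mul]
    refine AddValuation.map_lt_sum v WithTop.coe_ne_top fun x hx => (hterm n x hx).2 ?_
    have := Finset.HasAntidiagonal.mem_antidiagonal.1 hx
    omega

theorem IsTopGaussIndex.pow {p : R[X]} {j : ℕ} {Λ : Γ} (hp : IsTopGaussIndex v δ p j Λ)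
    (t : ℕ) : IsTopGaussIndex v δ (p ^ t) (t * j) (t • Λ) := by
  induction t with
  | zero => simpa using isTopGaussIndex_one
  | succ t ih => simpa [pow_succ, add_mul, succ_nsmul] using ih.mul hp

theorem IsTopGaussIndex.comp {u q : R[X]} {iw j : ℕ} {Λ μ : Γ}
    (hu : IsTopGaussIndex v Λ u iw μ) (hq : IsTopGaussIndex v δ q j Λ) (hj : 0 < j) :
    IsTopGaussIndex v δ (u.comp q) (iw * j) μ := by
  classical
  have hcoeff : ∀ n, (u.comp q).coeff n =
      ∑ i ∈ Finset.range (u.natDegree + 1), u.coeff i * (q ^ i).coeff n := by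
    intro n
    rw [Polynomial.comp, eval₂_eq_sum_range, finsetSum_coeff]
    simp only [coeff_C_mul]
  have hterm : ∀ n i, ((μ - n • δ : Γ) : WithTop Γ) ≤ v (u.coeff i * (q ^ i).coeff n) ∧
      (iw < i ∨ i * j < n →
        ((μ - n • δ : Γ) : WithTop Γ) < v (u.coeff i * (q ^ i).coeff n)) := by
    intro n i
    have hsplit : μ - n • δ = (μ - i • Λ) + (i • Λ - n • δ) := by abel
    rw [hsplit]
    exact ⟨AddValuation.coe_add_le_map_mul v (hu.1 i) ((hq.pow i).1 n), fun h =>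
      AddValuation.coe_add_lt_map_mul v (hu.1 i) ((hq.pow i).1 n)
        (h.imp (hu.2.2 i) ((hq.pow i).2.2 n))⟩
  refine ⟨fun n => ?_, ?_, fun n hn => ?_⟩
  · rw [hcoeff]
    exact AddValuation.map_le_sum v fun i _ => (hterm n i).1
  · have hiw : iw ∈ Finset.range (u.natDegree + 1) := by
      refine Finset.mem_range.2 (Nat.lt_succ_of_le (le_natDegree_of_ne_zero fun h => ?_))
      have := hu.2.1
      rw [h, AddValuation.map_zero] at this
      exact WithTop.top_ne_coe this
    have hcorner : v (u.coeff iw * (q ^ iw).coeff (iw * j)) =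
        ((μ - (iw * j) • δ : Γ) : WithTop Γ) := by
      rw [AddValuation.map_mul, hu.2.1, (hq.pow iw).2.1, ← WithTop.coe_add]
      congr 1; abel
    rw [hcoeff, AddValuation.map_sum_eq_of_lt v hiw, hcorner]
    intro i _ hne
    rw [hcorner]
    refine (hterm _ i).2 ?_
    rcases lt_or_gt_of_ne hne with h | h
    · exact Or.inr (Nat.mul_lt_mul_of_pos_right h hj)
    · exact Or.inl h
  · rw [hcoeff]
    refine AddValuation.map_lt_sum v WithTop.coe_ne_top fun i _ => (hterm n i).2 ?_
    by_contra! h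
    have := Nat.mul_le_mul_right j h.1
    omega

end GaussIndex

section MonomialVal

local notation "ιp" => algebraMap (Polynomial (AlgebraicClosure K)) (RatFunc (AlgebraicClosure K))

variable {vbar : AddValuation (AlgebraicClosure K) (WithTop Γ)}
  {V : AddValuation (RatFunc (AlgebraicClosure K)) (WithTop Γ)} {b : AlgebraicClosure K} {δ : Γ}

theorem IsMonomialVal.map_le_coeff_taylor (hV : IsMonomialVal vbar V b δ)
    (p : (AlgebraicClosure K)[X]) (i : ℕ) :
    V (ιp p) ≤ vbar ((taylor b p).coeff i) + i • (δ : WithTop Γ) := by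
  rw [hV p]
  rcases le_or_gt i p.natDegree with hi | hi
  · exact Finset.inf_le (Finset.mem_range.2 (Nat.lt_succ_of_le hi))
  · rw [coeff_eq_zero_of_natDegree_lt (natDegree_taylor p b ▸ hi)]
    simp

theorem IsMonomialVal.map_le_eval (hV : IsMonomialVal vbar V b δ) (p : (AlgebraicClosure K)[X]) :
    V (ιp p) ≤ vbar (p.eval b) := by
  simpa using hV.map_le_coeff_taylor p 0

theorem IsMonomialVal.map_eq_of_isTopGaussIndex (hV : IsMonomialVal vbar V b δ)
    {p : (AlgebraicClosure K)[X]} {j : ℕ} {Λ : Γ}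
    (h : IsTopGaussIndex vbar δ (taylor b p) j Λ) : V (ιp p) = Λ := by
  refine le_antisymm ?_ ?_
  · simpa [h.2.1, ← WithTop.coe_nsmul] using hV.map_le_coeff_taylor p j
  · rw [hV p]
    exact Finset.le_inf fun i _ => by
      simpa [← WithTop.coe_nsmul] using WithTop.coe_sub_le_iff_le_add.1 (h.1 i)

theorem IsMonomialVal.map_C (hV : IsMonomialVal vbar V b δ) (c : AlgebraicClosure K) :
    V (ιp (C c)) = vbar c := by
  rw [hV (C c)]
  simp

theorem IsMonomialVal.map_X_sub_C (hV : IsMonomialVal vbar V b δ) : V (ιp (X - C b)) = δ := by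
  rw [hV (X - C b)]
  simp [Finset.range_add_one, coeff_X]

theorem IsMonomialVal.lt_map_sub_C_eval (hV : IsMonomialVal vbar V b δ)
    {p : (AlgebraicClosure K)[X]} (hp : p ≠ 0) (hfar : ∀ ρ ∈ p.roots, vbar (b - ρ) < δ) :
    vbar (p.eval b) < V (ιp (p - C (p.eval b))) := by
  have hfac := (IsAlgClosed.splits p).eq_prod_roots
  have hx : ιp p = ιp (C p.leadingCoeff) * (p.roots.map fun ρ => ιp (X - C ρ)).prod := by
    conv_lhs => rw [hfac]
    simp only [map_mul, map_multiset_prod, Multiset.map_map, Function.comp_def]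
  have hy : ιp (C (p.eval b)) =
      ιp (C p.leadingCoeff) * (p.roots.map fun ρ => ιp (C (b - ρ))).prod := by
    conv_lhs => rw [hfac]
    simp only [eval_mul, eval_C, eval_multiset_prod, Multiset.map_map, Function.comp_def,
      eval_sub, eval_X, map_mul, map_multiset_prod]
  have hclose : ∀ ρ ∈ p.roots,
      V (ιp (C (b - ρ))) < V (ιp (X - C ρ) - ιp (C (b - ρ))) := by
    intro ρ hρ
    rw [← map_sub, show X - C ρ - C (b - ρ) = X - C b by rw [C_sub]; ring, hV.map_X_sub_C,
      hV.map_C]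
    exact hfar ρ hρ
  have hlc : V (ιp (C p.leadingCoeff)) < V (ιp (C p.leadingCoeff) - ιp (C p.leadingCoeff)) := by
    rw [sub_self, AddValuation.map_zero, hV.map_C, lt_top_iff_ne_top, AddValuation.ne_top_iff]
    exact leadingCoeff_ne_zero.2 hp
  have key := AddValuation.lt_map_mul_sub_mul V hlc
    (AddValuation.lt_map_multiset_prod_sub_prod V p.roots hclose)
  rwa [← hV.map_C (p.eval b), map_sub, hx, hy]

theorem IsMonomialVal.map_eq_eval_of_roots (hV : IsMonomialVal vbar V b δ)
    {p : (AlgebraicClosure K)[X]} (hp : p ≠ 0) (hfar : ∀ ρ ∈ p.roots, vbar (b - ρ) < δ) :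
    V (ιp p) = vbar (p.eval b) := by
  rw [← hV.map_C (p.eval b)]
  refine AddValuation.map_eq_of_lt_sub V ?_
  rw [← map_sub, hV.map_C]
  exact hV.lt_map_sub_C_eval hp hfar

theorem IsMonomialVal.map_comp_eq_of_isTopGaussIndex (hV : IsMonomialVal vbar V b δ)
    {u q : (AlgebraicClosure K)[X]} {iw j : ℕ} {Λ μ : Γ} (hu : IsTopGaussIndex vbar Λ u iw μ)
    (hq : IsTopGaussIndex vbar δ (taylor b q) j Λ) (hj : 0 < j) : V (ιp (u.comp q)) = μ := by
  refine hV.map_eq_of_isTopGaussIndex (j := iw * j) ?_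
  rw [taylor_apply, comp_assoc, ← taylor_apply]
  exact hu.comp hq hj

theorem IsMonomialVal.lt_map_comp_of_eval_eq_zero (hV : IsMonomialVal vbar V b δ)
    {u q : (AlgebraicClosure K)[X]} {c : AlgebraicClosure K} {Λ μ : Γ} (hc : vbar c = Λ)
    (hq : vbar c < V (ιp (q - C c)))
    (hu : ∀ i, ((μ - i • Λ : Γ) : WithTop Γ) ≤ vbar (u.coeff i)) (hroot : u.eval c = 0) :
    (μ : WithTop Γ) < V (ιp (u.comp q)) := by
  set g := (ιp).comp C
  have hcomp : ιp (u.comp q) = (u.map g).eval (ιp q) := by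
    rw [Polynomial.comp, hom_eval₂, eval_map]
  have hroot' : (u.map g).eval (g c) = 0 := by
    rw [eval_map, eval₂_at_apply, hroot, map_zero]
  rw [hcomp]
  refine AddValuation.lt_map_eval_of_eval_eq_zero V ((hV.map_C c).trans hc) ?_ (fun i => ?_)
    hroot'
  · rwa [← map_sub, hV.map_C]
  · rw [coeff_map, RingHom.comp_apply, hV.map_C]
    exact hu i

end MonomialVal

section MinimalPair

local notation "ιp" => algebraMap (Polynomial (AlgebraicClosure K)) (RatFunc (AlgebraicClosure K))

variable {vbar : AddValuation (AlgebraicClosure K) (WithTop Γ)}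
  {ω : AddValuation (RatFunc K) (WithTop Γ)}
  {W W' : AddValuation (RatFunc (AlgebraicClosure K)) (WithTop Γ)}
  {a a' : AlgebraicClosure K} {γ γ' : Γ}

theorem liftRF_algebraMap (p : K[X]) :
    liftRF K (algebraMap K[X] (RatFunc K) p) =
      algebraMap (AlgebraicClosure K)[X] (RatFunc (AlgebraicClosure K))
        (p.map (algebraMap K (AlgebraicClosure K))) := by
  rw [liftRF, RatFunc.coe_mapRingHom_eq_coe_map, ← div_one (algebraMap K[X] (RatFunc K) p),
    ← map_one (algebraMap K[X] (RatFunc K)), RatFunc.map_apply_div, map_one, map_one, div_one]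
  rfl

theorem Extends.map_polynomial (h : Extends (liftRF K) ω W) (p : K[X]) :
    W (ιp (p.map (algebraMap K (AlgebraicClosure K)))) = ω (algebraMap K[X] (RatFunc K) p) := by
  rw [← liftRF_algebraMap]
  exact h _

theorem IsMonomialVal.map_le_aeval (hW : IsMonomialVal vbar W a γ)
    (hWω : Extends (liftRF K) ω W) (f : K[X]) :
    ω (algebraMap K[X] (RatFunc K) f) ≤ vbar (aeval a f) := by
  rw [← hWω.map_polynomial, aeval_def, ← eval_map]
  exact hW.map_le_eval _

theorem IsMinimalPairFor.lt_of_mem_roots (hW : IsMinimalPairFor vbar W a γ) {f : K[X]}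
    (hf : f ≠ 0) (hdeg : f.natDegree < degOver K a) {ρ : AlgebraicClosure K}
    (hρ : ρ ∈ (f.map (algebraMap K (AlgebraicClosure K))).roots) : vbar (a - ρ) < γ := by
  by_contra! h
  have hroot : aeval ρ f = 0 := by
    rw [aeval_def, ← eval_map]
    exact isRoot_of_mem_roots hρ
  have := natDegree_le_of_dvd (minpoly.dvd K ρ hroot) hf
  have := hW.2 ρ h
  unfold degOver at this hdeg
  omega

theorem IsMinimalPairFor.map_eq_aeval (hW : IsMinimalPairFor vbar W a γ)
    (hWω : Extends (liftRF K) ω W) {f : K[X]} (hf : f ≠ 0) (hdeg : f.natDegree < degOver K a) :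
    ω (algebraMap K[X] (RatFunc K) f) = vbar (aeval a f) := by
  rw [← hWω.map_polynomial, aeval_def, ← eval_map]
  exact hW.1.map_eq_eval_of_roots ((Polynomial.map_ne_zero_iff (algebraMap K _).injective).2 hf)
    fun ρ hρ => hW.lt_of_mem_roots hf hdeg hρ

theorem IsMonomialVal.exists_isTopGaussIndex_minpoly (hW : IsMonomialVal vbar W a γ) :
    ∃ (j : ℕ) (Λ : Γ), 0 < j ∧
      W (ιp ((minpoly K a).map (algebraMap K (AlgebraicClosure K)))) = Λ ∧
      IsTopGaussIndex vbar γ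
        (taylor a ((minpoly K a).map (algebraMap K (AlgebraicClosure K)))) j Λ := by
  have hQ : (minpoly K a).map (algebraMap K (AlgebraicClosure K)) ≠ 0 :=
    (Polynomial.map_ne_zero_iff (algebraMap K _).injective).2
      (minpoly.ne_zero (Algebra.IsIntegral.isIntegral a))
  obtain ⟨j, Λ, hj⟩ :=
    exists_isTopGaussIndex (v := vbar) (δ := γ) (mt (taylor_eq_zero _ _).1 hQ)
  refine ⟨j, Λ, Nat.pos_of_ne_zero fun h0 => ?_, hW.map_eq_of_isTopGaussIndex hj, hj⟩
  have := hj.2.1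
  rw [h0, taylor_coeff_zero, eval_map, ← aeval_def, minpoly.aeval, AddValuation.map_zero] at this
  exact WithTop.top_ne_coe this

theorem IsMinimalPairFor.degOver_le (hW : IsMinimalPairFor vbar W a γ)
    (hW' : IsMonomialVal vbar W' a' γ') (hWω : Extends (liftRF K) ω W)
    (hW'ω : Extends (liftRF K) ω W') : degOver K a ≤ degOver K a' := by
  by_contra! hlt
  set φ := algebraMap K (AlgebraicClosure K)
  set Q := minpoly K a'
  have hQ : Q ≠ 0 := minpoly.ne_zero (Algebra.IsIntegral.isIntegral a')
  have hQφ : Q.map φ ≠ 0 := (Polynomial.map_ne_zero_iff φ.injective).2 hQ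
  have hfar : ∀ ρ ∈ (Q.map φ).roots, vbar (a - ρ) < γ := fun ρ hρ =>
    hW.lt_of_mem_roots hQ hlt hρ
  set b := (Q.map φ).eval a
  obtain ⟨j, Λ, hj, hW'Q, hQtop⟩ := hW'.exists_isTopGaussIndex_minpoly
  have hb : vbar b = Λ := by
    rw [← hW'Q, hW'ω.map_polynomial, ← hWω.map_polynomial,
      hW.1.map_eq_eval_of_roots hQφ hfar]
  set u := (minpoly K b).map φ
  have hu : u ≠ 0 :=
    (Polynomial.map_ne_zero_iff φ.injective).2 (minpoly.ne_zero (Algebra.IsIntegral.isIntegral b))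
  obtain ⟨iw, μ, hutop⟩ := exists_isTopGaussIndex (v := vbar) (δ := Λ) hu
  have hcomp : ((minpoly K b).comp Q).map φ = u.comp (Q.map φ) := by rw [Polynomial.map_comp]
  have hW'P := hW'.map_comp_eq_of_isTopGaussIndex hutop hQtop hj
  have hWP := hW.1.lt_map_comp_of_eval_eq_zero hb (hW.1.lt_map_sub_C_eval hQφ hfar) hutop.1
    (by rw [eval_map, ← aeval_def, minpoly.aeval])
  rw [← hcomp, hW'ω.map_polynomial] at hW'P
  rw [← hcomp, hWω.map_polynomial, hW'P] at hWP
  exact lt_irrefl _ hWP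

theorem IsMinimalPairFor.le_of_degOver_eq (hW : IsMinimalPairFor vbar W a γ)
    (hW' : IsMinimalPairFor vbar W' a' γ') (hWω : Extends (liftRF K) ω W)
    (hW'ω : Extends (liftRF K) ω W') (hdeg : degOver K a = degOver K a') : γ ≤ γ' := by
  set Q := minpoly K a
  obtain ⟨j, Λ, hj, hWQ, hQtop⟩ := hW.1.exists_isTopGaussIndex_minpoly
  set p₀ := hasseDeriv j Q
  have hcoeff : ∀ b : AlgebraicClosure K,
      (taylor b (Q.map (algebraMap K _))).coeff j = aeval b p₀ :=
    (Q.coeff_taylor_map_algebraMap · j)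
  have hp₀a : vbar (aeval a p₀) = ((Λ - j • γ : Γ) : WithTop Γ) := hcoeff a ▸ hQtop.2.1
  have hp₀ : p₀ ≠ 0 := by
    intro h
    rw [h, map_zero, AddValuation.map_zero] at hp₀a
    exact WithTop.top_ne_coe hp₀a
  have hdeg₀ : p₀.natDegree < degOver K a :=
    (natDegree_hasseDeriv_le Q j).trans_lt (Nat.sub_lt (minpoly.natDegree_pos
      (Algebra.IsIntegral.isIntegral a)) hj)
  have hval : vbar (aeval a' p₀) = vbar (aeval a p₀) := by
    rw [← hW'.map_eq_aeval hW'ω hp₀ (hdeg ▸ hdeg₀), hW.map_eq_aeval hWω hp₀ hdeg₀]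
  have hΛ : (Λ : WithTop Γ) ≤ ((Λ - j • γ + j • γ' : Γ) : WithTop Γ) := by
    calc (Λ : WithTop Γ) = W' (ιp (Q.map (algebraMap K _))) := by
          rw [← hWQ, hWω.map_polynomial, hW'ω.map_polynomial]
      _ ≤ vbar ((taylor a' (Q.map (algebraMap K _))).coeff j) + j • (γ' : WithTop Γ) :=
          hW'.1.map_le_coeff_taylor _ j
      _ = ((Λ - j • γ + j • γ' : Γ) : WithTop Γ) := by
          rw [hcoeff, hval, hp₀a, WithTop.coe_add, WithTop.coe_nsmul]
  refine le_of_nsmul_le_nsmul_right hj.ne' ?_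
  have := WithTop.coe_le_coe.1 hΛ
  rwa [sub_add_comm, le_add_iff_nonneg_left, sub_nonneg] at this

theorem IsMinimalPairFor.map_minpoly_eq (hW : IsMinimalPairFor vbar W a γ)
    (hW' : IsMinimalPairFor vbar W' a' γ') (hWω : Extends (liftRF K) ω W)
    (hW'ω : Extends (liftRF K) ω W') (hdeg : degOver K a = degOver K a') :
    ω (algebraMap K[X] (RatFunc K) (minpoly K a)) =
      ω (algebraMap K[X] (RatFunc K) (minpoly K a')) := by
  set Q := minpoly K a
  set Q' := minpoly K a'
  by_cases hQQ : Q = Q'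
  · rw [hQQ]
  have hD : Q - Q' ≠ 0 := sub_ne_zero.2 hQQ
  have hmonic := minpoly.monic (Algebra.IsIntegral.isIntegral (R := K) a)
  have hmonic' := minpoly.monic (Algebra.IsIntegral.isIntegral (R := K) a')
  have hdegD : (Q - Q').natDegree < degOver K a := by
    refine natDegree_lt_natDegree hD (degree_sub_lt_left ?_ hmonic.ne_zero ?_)
    · rw [degree_eq_natDegree hmonic.ne_zero, degree_eq_natDegree hmonic'.ne_zero]
      exact_mod_cast hdeg
    · rw [hmonic.leadingCoeff, hmonic'.leadingCoeff]
  have hωa : ω (algebraMap K[X] (RatFunc K) (Q - Q')) = vbar (aeval a Q') := by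
    rw [hW.map_eq_aeval hWω hD hdegD, map_sub, minpoly.aeval, zero_sub, AddValuation.map_neg]
  have hωa' : ω (algebraMap K[X] (RatFunc K) (Q - Q')) = vbar (aeval a' Q) := by
    rw [hW'.map_eq_aeval hW'ω hD (hdeg ▸ hdegD), map_sub, minpoly.aeval, sub_zero]
  refine AddValuation.map_eq_of_le_map_sub ω ?_ ?_ <;> rw [← map_sub]
  · rw [hωa']
    exact hW'.1.map_le_aeval hW'ω Q
  · rw [hωa]
    exact hW.1.map_le_aeval hWω Q'

end MinimalPair

theorem statement_11_general {K : Type} [Field K] {Γ : Type} [AddCommGroup Γ] [LinearOrder Γ] [IsOrderedAddMonoid Γ]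
    (vbar : AddValuation (AlgebraicClosure K) (WithTop Γ))
    (ω : AddValuation (RatFunc K) (WithTop Γ))
    (W W' : AddValuation (RatFunc (AlgebraicClosure K)) (WithTop Γ))
    (hWω : Extends (liftRF K) ω W) (hW'ω : Extends (liftRF K) ω W')
    (a a' : AlgebraicClosure K) (γ γ' : Γ)
    (hW : IsMinimalPairFor vbar W a γ)
    (hW' : IsMinimalPairFor vbar W' a' γ') :
    γ = γ' ∧
    (minpoly K a).natDegree = (minpoly K a').natDegree ∧
    ω (algebraMap (Polynomial K) (RatFunc K) (minpoly K a)) =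
      ω (algebraMap (Polynomial K) (RatFunc K) (minpoly K a')) := by
  have hdeg : degOver K a = degOver K a' :=
    le_antisymm (hW.degOver_le hW'.1 hWω hW'ω) (hW'.degOver_le hW.1 hW'ω hWω)
  exact ⟨le_antisymm (hW.le_of_degOver_eq hW' hWω hW'ω hdeg)
      (hW'.le_of_degOver_eq hW hW'ω hWω hdeg.symm),
    hdeg, hW.map_minpoly_eq hW' hWω hW'ω hdeg⟩

/-- Lemma: two common extensions of `ω` have matching minimal pairs.
Let `ω` be a valuation transcendental extension of `ν` to `K(x)` and let `W = ω̄` and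
`W' = ω̄′` be two common extensions of `ω` and `ν̄` to `K̄(x)` with minimal pairs of
definition `(a,γ)` and `(a',γ')`, with minimal polynomials `Q = minpoly K a` and
`Q' = minpoly K a'`.  Then `γ = γ'`, `deg Q = deg Q'` and `ωQ = ωQ'`. -/
theorem statement_11 {K : Type} [Field K] {Γ : Type} [AddCommGroup Γ] [LinearOrder Γ] [IsOrderedAddMonoid Γ]
    (vbar : AddValuation (AlgebraicClosure K) (WithTop Γ))
    (ω : AddValuation (RatFunc K) (WithTop Γ))
    (hvt : IsValuationTranscendental (algebraMap K (RatFunc K)) ω)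
    (W W' : AddValuation (RatFunc (AlgebraicClosure K)) (WithTop Γ))
    (hWω : Extends (liftRF K) ω W) (hW'ω : Extends (liftRF K) ω W')
    (a a' : AlgebraicClosure K) (γ γ' : Γ)
    (hW : IsMinimalPairFor vbar W a γ)
    (hW' : IsMinimalPairFor vbar W' a' γ') :
    γ = γ' ∧
    (minpoly K a).natDegree = (minpoly K a').natDegree ∧
    ω (algebraMap (Polynomial K) (RatFunc K) (minpoly K a)) =
      ω (algebraMap (Polynomial K) (RatFunc K) (minpoly K a')) :=
  statement_11_general vbar ω W W' hWω hW'ω a a' γ γ' hW hW'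

end VT
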